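/- arXiv:2511.20117 — 5 statements merged into one kernel-verified Lean document; each statement's English description precedes it below -/
import Mathlib

section
/- In the cyclic association network on Z/KZ where relay j is connected to the user set U_j = {j, j+1, ..., j+n-1} (indices mod K), for every nonempty set H of relays with |H| = s, the union ∪_{j∈H} U_j has cardinality at least min(K, s + n - 1); moreover, if H consists of s consecutive relays and s + n - 1 ≤ K, then the union has cardinality exactly s + n - 1. -/
lemma closed_univ {K : ℕ} [NeZero K] (hK : 0 < K) (S : Finset (ZMod K)) (hne : S.Nonempty)
    (hcl : ∀ x ∈ S, x + 1 ∈ S) : S = Finset.univ := by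
  obtain ⟨a, ha⟩ := hne
  have hstep : ∀ k : ℕ, a + (k : ZMod K) ∈ S := by
    intro k
    induction k with
    | zero => simpa using ha
    | succ k ih =>
      have := hcl _ ih
      push_cast
      convert this using 1
      ring
  apply Finset.eq_univ_of_forall
  intro x
  have := hstep (x - a).val
  rwa [ZMod.natCast_val, ZMod.cast_id, add_sub_cancel] at this

lemma grow {K : ℕ} [NeZero K] (hK : 0 < K) (S : Finset (ZMod K)) (hne : S.Nonempty) :
    min K (S.card + 1) ≤ (S ∪ S.image (· + 1)).card := by
  by_cases hcl : ∀ x ∈ S, x + 1 ∈ S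
  · have : S = Finset.univ := closed_univ hK S hne hcl
    have h1 : Finset.univ ⊆ S ∪ S.image (· + 1) := by rw [this]; exact Finset.subset_union_left
    have := Finset.card_le_card h1
    simp only [Finset.card_univ, ZMod.card] at this
    omega
  · push_neg at hcl
    obtain ⟨x, hx, hx1⟩ := hcl
    have hss : S ⊂ S ∪ S.image (· + 1) := by
      refine ⟨Finset.subset_union_left, fun hsub => hx1 ?_⟩
      exact hsub (Finset.mem_union_right _ (Finset.mem_image_of_mem _ hx))
    have := Finset.card_lt_card hss
    omega

/-- In the cyclic association network on `ZMod K` where relay `j` is connected to the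
user set `U_j = {j, j+1, ..., j+n-1}` (mod `K`), every nonempty set `H` of relays with
`|H| = s` has `|⋃_{j ∈ H} U_j| ≥ min K (s + n - 1)`; moreover if `H` consists of `s`
consecutive relays and `s + n - 1 ≤ K` then the union has cardinality exactly `s + n - 1`. -/
theorem stmt_1 (K n s : ℕ) (hK : 0 < K) (hn1 : 1 ≤ n) (hnK : n ≤ K)
    (Uj : ZMod K → Finset (ZMod K))
    (hU : ∀ j, Uj j = (Finset.range n).image (fun r : ℕ => (j + (r : ZMod K) : ZMod K)))
    (H : Finset (ZMod K)) (hHcard : H.card = s) (hHne : H.Nonempty) :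
    min K (s + n - 1) ≤ (H.biUnion Uj).card ∧
      (∀ j₀ : ZMod K, H = (Finset.range s).image (fun r : ℕ => (j₀ + (r : ZMod K) : ZMod K)) →
        s + n - 1 ≤ K → (H.biUnion Uj).card = s + n - 1) := by
  haveI : NeZero K := ⟨hK.ne'⟩
  have hs1 : 1 ≤ s := by
    rw [← hHcard]; exact Finset.card_pos.mpr hHne
  have hsK : s ≤ K := by
    have := Finset.card_le_univ H
    rwa [hHcard, ZMod.card] at this
  set A : ℕ → Finset (ZMod K) :=
    fun m => H.biUnion (fun j => (Finset.range m).image (fun r : ℕ => (j + (r : ZMod K)))) with hA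
  have hAU : H.biUnion Uj = A n := by
    apply Finset.biUnion_congr rfl
    intro j _
    rw [hU]
  have hAne : ∀ m, (A (m+1)).Nonempty := by
    intro m
    obtain ⟨j, hj⟩ := hHne
    exact ⟨j, Finset.mem_biUnion.mpr ⟨j, hj, Finset.mem_image.mpr
      ⟨0, Finset.mem_range.mpr (Nat.succ_pos m), by simp⟩⟩⟩
  have key : ∀ m, min K (s + m) ≤ (A (m+1)).card := by
    intro m
    induction m with
    | zero =>
      have hA1 : A 1 = H := by
        ext x
        simp [hA, Finset.mem_biUnion, Finset.range_one]
      rw [hA1, hHcard]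
      omega
    | succ m ih =>
      have hsub : A (m+1) ∪ (A (m+1)).image (· + 1) ⊆ A (m+1+1) := by
        intro x hx
        rcases Finset.mem_union.mp hx with hx | hx
        · obtain ⟨j, hj, hxj⟩ := Finset.mem_biUnion.mp hx
          obtain ⟨r, hr, hrx⟩ := Finset.mem_image.mp hxj
          have hr' := Finset.mem_range.mp hr
          exact Finset.mem_biUnion.mpr ⟨j, hj, Finset.mem_image.mpr
            ⟨r, Finset.mem_range.mpr (by omega), hrx⟩⟩
        · obtain ⟨y, hy, hyx⟩ := Finset.mem_image.mp hx
          obtain ⟨j, hj, hxj⟩ := Finset.mem_biUnion.mp hy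
          obtain ⟨r, hr, hrx⟩ := Finset.mem_image.mp hxj
          have hr' := Finset.mem_range.mp hr
          refine Finset.mem_biUnion.mpr ⟨j, hj, Finset.mem_image.mpr
            ⟨r + 1, Finset.mem_range.mpr (by omega), ?_⟩⟩
          rw [← hyx, ← hrx]
          push_cast
          ring
      have h1 := grow hK (A (m+1)) (hAne m)
      have h2 := Finset.card_le_card hsub
      omega
  constructor
  · rw [hAU]
    have h := key (n - 1)
    have : n - 1 + 1 = n := by omega
    rw [this] at h
    have : s + (n - 1) = s + n - 1 := by omega
    omega
  · intro j₀ hH hle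
    have hunion : H.biUnion Uj =
        (Finset.range (s + n - 1)).image (fun r : ℕ => (j₀ + (r : ZMod K))) := by
      ext x
      simp only [Finset.mem_biUnion, Finset.mem_image, Finset.mem_range, hU, hH]
      constructor
      · rintro ⟨j, ⟨a, ha, rfl⟩, r, hr, rfl⟩
        refine ⟨a + r, by omega, ?_⟩
        push_cast
        ring
      · rintro ⟨t, ht, rfl⟩
        refine ⟨j₀ + ((min t (s-1) : ℕ) : ZMod K), ⟨min t (s-1), by omega, rfl⟩,
          t - min t (s-1), by omega, ?_⟩
        have hsum : ((min t (s-1) : ℕ) : ZMod K) + ((t - min t (s-1) : ℕ) : ZMod K)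
            = (t : ZMod K) := by
          rw [← Nat.cast_add]
          congr 1
          omega
        rw [add_assoc, hsum]
    rw [hunion, Finset.card_image_of_injOn, Finset.card_range]
    intro a ha b hb hab
    simp only [Finset.coe_range, Set.mem_Iio] at ha hb
    have : (a : ZMod K) = b := by
      have := add_left_cancel hab
      exact this
    have ha' : ((a : ZMod K)).val = a := ZMod.val_cast_of_lt (by omega)
    have hb' : ((b : ZMod K)).val = b := ZMod.val_cast_of_lt (by omega)
    rw [← ha', ← hb', this]
end

section
/- Every square submatrix of a Cauchy matrix is invertible. Precisely, let F be a field, let α_1,...,α_M ∈ F be pairwise distinct and β_1,...,β_N ∈ F be pairwise distinct, with α_i + β_j ≠ 0 for all i, j. Then for any k, any k×k submatrix of the matrix B with entries B_{ij} = 1/(α_i + β_j) (obtained by selecting k rows and k columns) has nonzero determinant. -/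
open Polynomial Finset

/-- Every square submatrix of a Cauchy matrix is invertible. -/
theorem stmt_2 {F : Type*} [Field F] {M N k : ℕ}
    (α : Fin M → F) (β : Fin N → F)
    (hα : Function.Injective α) (hβ : Function.Injective β)
    (h : ∀ i j, α i + β j ≠ 0)
    (r : Fin k → Fin M) (c : Fin k → Fin N)
    (hr : StrictMono r) (hc : StrictMono c) :
    Matrix.det (Matrix.of fun s t => (α (r s) + β (c t))⁻¹) ≠ 0 := by
  rcases Nat.eq_zero_or_pos k with rfl | hk
  · simp [Matrix.det_fin_zero]
  intro hdet
  obtain ⟨v, hv, hmul⟩ := (Matrix.exists_mulVec_eq_zero_iff).2 hdet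
  -- a = α ∘ r, b = β ∘ c are injective
  have ha : Function.Injective (α ∘ r) := hα.comp hr.injective
  have hb : Function.Injective (β ∘ c) := hβ.comp hc.injective
  set P : F[X] := ∑ t : Fin k, C (v t) * ∏ u ∈ univ.erase t, (X + C (β (c u))) with hP
  have hdeg : P.natDegree < k := by
    refine lt_of_le_of_lt (natDegree_sum_le_of_forall_le (n := k - 1) _ _ fun t _ => ?_) (by omega)
    · calc (C (v t) * ∏ u ∈ univ.erase t, (X + C (β (c u)))).natDegree
          ≤ (C (v t)).natDegree + (∏ u ∈ univ.erase t, (X + C (β (c u)))).natDegree :=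
            natDegree_mul_le
        _ ≤ 0 + ∑ u ∈ univ.erase t, (X + C (β (c u))).natDegree := by
            gcongr
            · exact le_of_eq (natDegree_C _)
            · exact natDegree_prod_le _ _
        _ ≤ ∑ u ∈ univ.erase t, 1 := by
            simp only [zero_add]
            exact Finset.sum_le_sum fun u _ => le_of_eq (natDegree_X_add_C _)
        _ = k - 1 := by simp [Finset.card_erase_of_mem]
  have heval : ∀ s : Fin k, P.eval (α (r s)) = 0 := by
    intro s
    have hrow : ∑ t : Fin k, (α (r s) + β (c t))⁻¹ * v t = 0 := by
      have := congrFun hmul s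
      simpa [Matrix.mulVec, dotProduct] using this
    have : P.eval (α (r s)) =
        (∏ u : Fin k, (α (r s) + β (c u))) * ∑ t : Fin k, (α (r s) + β (c t))⁻¹ * v t := by
      rw [Finset.mul_sum, hP]
      simp only [eval_finset_sum, eval_mul, eval_C, eval_prod, eval_add, eval_X]
      refine Finset.sum_congr rfl fun t _ => ?_
      rw [← Finset.mul_prod_erase (a := t) univ _ (mem_univ t)]
      field_simp [h]
    rw [this, hrow, mul_zero]
  have hP0 : P = 0 :=
    P.eq_zero_of_natDegree_lt_card_of_eval_eq_zero ha heval (by simpa using hdeg)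
  -- evaluate at -β (c t₀) to conclude v t₀ = 0
  apply hv
  funext t₀
  have := congrArg (Polynomial.eval (-(β (c t₀)))) hP0
  rw [hP] at this
  simp only [eval_finset_sum, eval_mul, eval_C, eval_prod, eval_add, eval_X, eval_zero] at this
  rw [Finset.sum_eq_single t₀] at this
  · have hne : (∏ u ∈ univ.erase t₀, (-(β (c t₀)) + β (c u))) ≠ 0 := by
      refine Finset.prod_ne_zero_iff.2 fun u hu => ?_
      have : c u ≠ c t₀ := fun hcc => (Finset.mem_erase.1 hu).1 (hc.injective hcc)
      intro h0
      exact this (hβ (by linear_combination h0))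
    simpa [Pi.zero_apply] using (mul_eq_zero.1 this).resolve_right hne
  · intro t _ ht
    have : (-(β (c t₀)) + β (c t₀)) = 0 := by ring
    rw [Finset.prod_eq_zero (Finset.mem_erase.2 ⟨(Ne.symm ht), mem_univ _⟩) this, mul_zero]
  · intro habs; exact absurd (mem_univ t₀) habs
end

section
/- The dual (kernel) of an MDS matrix is MDS: let F be a field and B ∈ F^{m×K} a matrix with m < K such that every m×m submatrix of B (selecting any m columns) is invertible. Then there exists a matrix Q ∈ F^{K×(K−m)} whose columns form a basis of the right kernel of B (i.e., B·Q = 0 and rank Q = K−m) such that every (K−m)×(K−m) submatrix of Q formed by selecting K−m rows is invertible. -/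
open Matrix Finset

/-- The dual (kernel) of an MDS matrix is MDS: if every `m × m` submatrix of
`B ∈ F^{m×K}` (with `m < K`) is invertible, then there is a matrix `Q ∈ F^{K×(K−m)}`
with `B·Q = 0` and `rank Q = K − m` (so its columns form a basis of the right kernel
of `B`) such that every `(K−m)×(K−m)` submatrix of `Q` obtained by selecting `K−m`
rows is invertible. -/
theorem stmt_4 {F : Type*} [Field F] {m K : ℕ} (hm : 1 ≤ m) (hmK : m < K)
    (B : Matrix (Fin m) (Fin K) F)
    (hB : ∀ c : Fin m → Fin K, StrictMono c → (B.submatrix id c).det ≠ 0) :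
    ∃ Q : Matrix (Fin K) (Fin (K - m)) F,
      B * Q = 0 ∧ Q.rank = K - m ∧
        ∀ r : Fin (K - m) → Fin K, StrictMono r → (Q.submatrix r id).det ≠ 0 := by
  classical
  set n := K - m with hn
  -- Step 1: B has full row rank, i.e. mulVecLin B is surjective.
  have hsurj : Function.Surjective B.mulVecLin := by
    intro y
    set c0 : Fin m → Fin K := Fin.castLE hmK.le with hc0
    have hdet : (B.submatrix id c0).det ≠ 0 := hB c0 (Fin.strictMono_castLE _)
    set A : Matrix (Fin m) (Fin m) F := B.submatrix id c0 with hA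
    have hAunit : IsUnit A.det := isUnit_iff_ne_zero.mpr hdet
    set z : Fin m → F := A⁻¹.mulVec y with hz
    have hAz : A.mulVec z = y := by
      rw [hz, Matrix.mulVec_mulVec, Matrix.mul_nonsing_inv _ hAunit, Matrix.one_mulVec]
    refine ⟨fun k => if h : (k : ℕ) < m then z ⟨k, h⟩ else 0, ?_⟩
    ext i
    have hemb : Function.Injective c0 := (Fin.strictMono_castLE _).injective
    have hsum : ∑ k : Fin K, B i k * (if h : (k : ℕ) < m then z ⟨k, h⟩ else 0)
        = ∑ j : Fin m, B i (c0 j) * z j := by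
      have e1 : ∑ j : Fin m, B i (c0 j) * z j
          = ∑ k ∈ Finset.univ.map ⟨c0, hemb⟩,
              B i k * (if h : (k : ℕ) < m then z ⟨k, h⟩ else 0) := by
        rw [Finset.sum_map]
        apply Finset.sum_congr rfl
        intro j _
        have hlt : ((c0 j : Fin K) : ℕ) < m := j.2
        simp only [Function.Embedding.coeFn_mk, hlt, dif_pos]
        congr 1
      rw [e1]
      symm
      apply Finset.sum_subset (Finset.subset_univ _)
      intro k _ hk
      have : ¬ (k : ℕ) < m := by
        intro hlt
        exact hk (Finset.mem_map.mpr ⟨⟨k, hlt⟩, Finset.mem_univ _, rfl⟩)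
      simp [this]
    simp only [Matrix.mulVecLin_apply, Matrix.mulVec, dotProduct]
    rw [hsum]
    simpa [Matrix.mulVec, dotProduct, hA, Matrix.submatrix_apply] using congrFun hAz i
  -- Step 2: the kernel of mulVecLin B has dimension n = K - m.
  have hrange : LinearMap.range B.mulVecLin = ⊤ := LinearMap.range_eq_top.mpr hsurj
  have hkerdim : Module.finrank F (LinearMap.ker B.mulVecLin) = n := by
    have h1 := LinearMap.finrank_range_add_finrank_ker B.mulVecLin
    rw [hrange, finrank_top, Module.finrank_fin_fun, Module.finrank_fin_fun] at h1
    omega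
  -- Step 3: build Q from a basis of the kernel.
  set V := LinearMap.ker B.mulVecLin with hV
  let b : Module.Basis (Fin n) F V := (Module.finBasis F V).reindex (finCongr hkerdim)
  set Q : Matrix (Fin K) (Fin n) F := fun i j => (b j : Fin K → F) i with hQ
  -- mulVec of Q is the coercion of the linear combination of basis vectors.
  have hQmul : ∀ v : Fin n → F, Q.mulVec v = ((∑ j, v j • b j : V) : Fin K → F) := by
    intro v
    ext k
    have : ((∑ j, v j • b j : V) : Fin K → F) k = ∑ j, v j • ((b j : Fin K → F) k) := by
      rw [show ((∑ j, v j • b j : V) : Fin K → F) = ∑ j, v j • ((b j : V) : Fin K → F) by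
        push_cast; rfl]
      simp [Finset.sum_apply]
    rw [this]
    simp [Matrix.mulVec, dotProduct, hQ, mul_comm, smul_eq_mul]
  have hQinj : Function.Injective Q.mulVecLin := by
    rw [← LinearMap.ker_eq_bot, LinearMap.ker_eq_bot']
    intro v hv
    rw [Matrix.mulVecLin_apply, hQmul] at hv
    have h0 : (∑ j, v j • b j : V) = 0 := by
      exact_mod_cast Subtype.ext hv
    have := (Fintype.linearIndependent_iff.mp b.linearIndependent) v h0
    funext j; exact this j
  -- B * Q = 0
  have hBQ : B * Q = 0 := by
    ext i j
    have hb : B.mulVecLin (b j : Fin K → F) = 0 := (b j).2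
    have : B.mulVec (b j : Fin K → F) i = 0 := by
      rw [← Matrix.mulVecLin_apply, hb]; rfl
    rw [Matrix.mul_apply]
    simpa [Matrix.mulVec, dotProduct, hQ] using this
  -- rank Q = n
  have hQrank : Q.rank = n := by
    rw [Matrix.rank, LinearMap.finrank_range_of_inj hQinj, Module.finrank_fin_fun]
  refine ⟨Q, hBQ, hQrank, ?_⟩
  -- Step 4: every (K-m)×(K-m) row-submatrix of Q is invertible.
  intro r hr hdet
  obtain ⟨v, hv0, hv⟩ := (Matrix.exists_mulVec_eq_zero_iff.mpr hdet)
  set x : Fin K → F := Q.mulVec v with hx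
  -- x vanishes on the range of r
  have hxr : ∀ i, x (r i) = 0 := by
    intro i
    have := congrFun hv i
    simpa [Matrix.mulVec, dotProduct, Matrix.submatrix_apply, hx] using this
  -- x is in the kernel of B
  have hxker : B.mulVec x = 0 := by
    rw [hx, Matrix.mulVec_mulVec, hBQ, Matrix.zero_mulVec]
  -- x is nonzero
  have hxne : x ≠ 0 := by
    intro h
    exact hv0 (hQinj (by simpa [Matrix.mulVecLin_apply, hx] using h))
  -- complement of range of r
  set T : Finset (Fin K) := (Finset.univ.map ⟨r, hr.injective⟩)ᶜ with hT
  have hTcard : T.card = m := by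
    rw [hT, Finset.card_compl, Finset.card_map, Finset.card_univ, Fintype.card_fin,
      Fintype.card_fin]
    omega
  set c : Fin m → Fin K := ⇑(T.orderEmbOfFin hTcard) with hc
  have hcmono : StrictMono c := (T.orderEmbOfFin hTcard).strictMono
  have hcmem : ∀ j, c j ∈ T := fun j => T.orderEmbOfFin_mem hTcard j
  have hcrange : Finset.univ.map (T.orderEmbOfFin hTcard).toEmbedding = T := by
    apply Finset.coe_injective
    rw [Finset.coe_map, Finset.coe_univ, Set.image_univ]
    exact T.range_orderEmbOfFin hTcard
  -- (B.submatrix id c).mulVec (x ∘ c) = 0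
  have hsub : (B.submatrix id c).mulVec (x ∘ c) = 0 := by
    ext i
    have hkey : ∑ j : Fin m, B i (c j) * x (c j) = ∑ k : Fin K, B i k * x k := by
      rw [show (∑ j : Fin m, B i (c j) * x (c j))
          = ∑ k ∈ Finset.univ.map (T.orderEmbOfFin hTcard).toEmbedding, B i k * x k by
        rw [Finset.sum_map]; rfl]
      apply Finset.sum_subset (Finset.subset_univ _)
      intro k _ hk
      rw [hcrange] at hk
      have : k ∈ Finset.univ.map ⟨r, hr.injective⟩ := by
        by_contra hkk
        exact hk (Finset.mem_compl.mpr hkk)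
      obtain ⟨i', _, hi'⟩ := Finset.mem_map.mp this
      rw [show k = r i' from hi'.symm, hxr i', mul_zero]
    have := congrFun hxker i
    simp only [Matrix.mulVec, dotProduct, Matrix.submatrix_apply, id_eq,
      Function.comp_apply, Pi.zero_apply] at this ⊢
    rw [hkey]; exact this
  -- hence x ∘ c = 0 by invertibility of B.submatrix id c
  have hxc : ∀ j, x (c j) = 0 := by
    have hdetc := hB c hcmono
    intro j
    by_contra hne
    have : ∃ w, w ≠ 0 ∧ (B.submatrix id c).mulVec w = 0 :=
      ⟨x ∘ c, fun h => hne (congrFun h j), hsub⟩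
    exact hdetc (Matrix.exists_mulVec_eq_zero_iff.mp this)
  -- so x = 0, contradiction
  apply hxne
  funext k
  by_cases hk : k ∈ T
  · rw [← hcrange] at hk
    obtain ⟨j, _, hj⟩ := Finset.mem_map.mp hk
    rw [← hj]; exact hxc j
  · have : k ∈ Finset.univ.map ⟨r, hr.injective⟩ := by
      by_contra hkk
      exact hk (Finset.mem_compl.mpr hkk)
    obtain ⟨i', _, hi'⟩ := Finset.mem_map.mp this
    rw [← hi']; exact hxr i'
end

section
/- Let q be a prime with q ≥ N + 2, N ≥ 3, and work over F_q. Define λ_i = (i − N − 1)/(N − i) for 1 ≤ i ≤ N−1 and λ_N = −1/N. Let Λ ∈ F_q^{N×N} be the matrix with Λ_{i,i} = 1 and Λ_{i,i+1} = λ_i for i ≤ N−1, Λ_{N,N} = 1 and Λ_{N,1} = λ_N, and all other entries zero. Let D ∈ F_q^{2×N} have first row all ones and second row (1, 2, ..., N). Let B = (I_{N−1} | b) ∈ F_q^{(N−1)×N} where the last column has entries b_i = −(1+λ_i)/(1+λ_N) for 1 ≤ i ≤ N−1. Then: (a) every row of Λ·D^T is a scalar multiple of the row vector (1, N+1); (b)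 B·Λ·D^T = 0; and (c) every entry b_i is nonzero. -/
/-- Properties of the matrices `Λ`, `D`, `B` used in the `(0,1,N−3)`-secure scheme for
cyclic networks with `n = m = 2`: (a) every row of `Λ·Dᵀ` is a scalar multiple of
`(1, N+1)`; (b) `B·Λ·Dᵀ = 0`; (c) every entry `bᵢ` of the last column of `B` is
nonzero. -/
theorem stmt_9 (q N : ℕ) [Fact (Nat.Prime q)] (hq : N + 2 ≤ q) (hN : 3 ≤ N)
    (lam : Fin N → ZMod q)
    (hlam : ∀ i : Fin N, lam i =
      if (i : ℕ) = N - 1 then -(N : ZMod q)⁻¹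
      else ((((i : ℕ) + 1 : ℕ) : ZMod q) - (N : ZMod q) - 1) /
        ((N : ZMod q) - (((i : ℕ) + 1 : ℕ) : ZMod q)))
    (Λ : Matrix (Fin N) (Fin N) (ZMod q))
    (hΛ : ∀ i j : Fin N, Λ i j =
      if j = i then 1 else if (j : ℕ) = ((i : ℕ) + 1) % N then lam i else 0)
    (D : Matrix (Fin 2) (Fin N) (ZMod q))
    (hD : ∀ (r : Fin 2) (j : Fin N), D r j =
      if r = 0 then 1 else (((j : ℕ) + 1 : ℕ) : ZMod q))
    (B : Matrix (Fin (N - 1)) (Fin N) (ZMod q))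
    (hB : ∀ (i : Fin (N - 1)) (j : Fin N), B i j =
      if (j : ℕ) = (i : ℕ) then 1
      else if (j : ℕ) = N - 1 then
        -(1 + lam (Fin.castLE (Nat.sub_le N 1) i)) / (1 + lam ⟨N - 1, by omega⟩)
      else 0) :
    (∀ i : Fin N, ∃ cst : ZMod q, ∀ r : Fin 2,
        (Λ * D.transpose) i r = cst * (if r = 0 then 1 else (N : ZMod q) + 1)) ∧
      B * Λ * D.transpose = 0 ∧
      (∀ i : Fin (N - 1), B i ⟨N - 1, by omega⟩ ≠ 0) := by
  have hnz : ∀ k : ℕ, 0 < k → k ≤ N + 1 → (k : ZMod q) ≠ 0 := by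
    intro k h1 h2 h0
    have hd := (ZMod.natCast_eq_zero_iff k q).mp h0
    have := Nat.le_of_dvd h1 hd
    omega
  have hNz : (N : ZMod q) ≠ 0 := hnz N (by omega) (by omega)
  -- denominator nonzero for i < N - 1
  have hden : ∀ i : Fin N, (i : ℕ) ≠ N - 1 →
      (N : ZMod q) - (((i : ℕ) + 1 : ℕ) : ZMod q) ≠ 0 := by
    intro i hi
    have hlt : (i : ℕ) + 1 ≤ N := i.isLt
    have : (N : ZMod q) - (((i : ℕ) + 1 : ℕ) : ZMod q)
        = ((N - ((i : ℕ) + 1) : ℕ) : ZMod q) := by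
      push_cast [Nat.cast_sub hlt]; ring
    rw [this]
    exact hnz _ (by omega) (by omega)
  -- 1 + lam i is nonzero
  have hone : ∀ i : Fin N, 1 + lam i ≠ 0 := by
    intro i
    rcases eq_or_ne ((i : ℕ)) (N - 1) with hi | hi
    · rw [hlam, if_pos hi]
      have h1 : 1 + -(N : ZMod q)⁻¹ = ((N : ZMod q) - 1) / (N : ZMod q) := by
        field_simp
        ring
      rw [h1]
      refine div_ne_zero ?_ hNz
      have : (N : ZMod q) - 1 = ((N - 1 : ℕ) : ZMod q) := by
        push_cast [Nat.cast_sub (by omega : 1 ≤ N)]; ring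
      rw [this]
      exact hnz _ (by omega) (by omega)
    · rw [hlam, if_neg hi]
      have hd := hden i hi
      have h1 : 1 + ((((i : ℕ) + 1 : ℕ) : ZMod q) - (N : ZMod q) - 1) /
          ((N : ZMod q) - (((i : ℕ) + 1 : ℕ) : ZMod q))
          = -1 / ((N : ZMod q) - (((i : ℕ) + 1 : ℕ) : ZMod q)) := by
        push_cast at hd ⊢
        field_simp
        ring
      rw [h1]
      exact div_ne_zero (neg_ne_zero.mpr one_ne_zero) hd
  -- the key row computation
  have key : ∀ (i : Fin N) (r : Fin 2),
      (Λ * D.transpose) i r = (1 + lam i) * (if r = 0 then 1 else (N : ZMod q) + 1) := by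
    intro i r
    have hiN : (i : ℕ) < N := i.isLt
    set j1 : Fin N := ⟨((i : ℕ) + 1) % N, Nat.mod_lt _ (by omega)⟩ with hj1
    have hne : i ≠ j1 := by
      intro h
      have hv : (i : ℕ) = ((i : ℕ) + 1) % N := congrArg Fin.val h
      rcases Nat.lt_or_ge ((i : ℕ) + 1) N with h' | h'
      · rw [Nat.mod_eq_of_lt h'] at hv; omega
      · have hi' : (i : ℕ) + 1 = N := by omega
        rw [hi', Nat.mod_self] at hv; omega
    have hsum : (Λ * D.transpose) i r = D r i + lam i * D r j1 := by
      rw [Matrix.mul_apply]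
      calc ∑ j, Λ i j * D.transpose j r
          = ∑ j, ((if j = i then D r i else 0) + (if j = j1 then lam i * D r j1 else 0)) := by
            refine Finset.sum_congr rfl fun j _ => ?_
            rw [hΛ, Matrix.transpose_apply]
            by_cases h1 : j = i
            · subst h1
              simp [hne]
            · by_cases h2 : j = j1
              · subst h2
                have : ((j1 : Fin N) : ℕ) = ((i : ℕ) + 1) % N := rfl
                simp [h1, this]
              · have h2' : ¬ ((j : ℕ) = ((i : ℕ) + 1) % N) := fun hc => h2 (Fin.ext hc)
                simp [h1, h2, h2']
        _ = D r i + lam i * D r j1 := by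
            rw [Finset.sum_add_distrib]
            simp
    rw [hsum, hD, hD]
    rcases eq_or_ne ((i : ℕ)) (N - 1) with hi | hi
    · have hj1v : (j1 : ℕ) = 0 := by
        show ((i : ℕ) + 1) % N = 0
        have : (i : ℕ) + 1 = N := by omega
        rw [this, Nat.mod_self]
      rw [hlam, if_pos hi]
      fin_cases r
      · simp
      · have hi1 : (((i : ℕ) + 1 : ℕ) : ZMod q) = (N : ZMod q) := by
          rw [show (i : ℕ) + 1 = N by omega]
        rw [hj1v]
        simp only [hi1]
        norm_num
        field_simp
        ring
    · have hj1v : (j1 : ℕ) = (i : ℕ) + 1 := Nat.mod_eq_of_lt (by omega)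
      rw [hlam, if_neg hi]
      have hd := hden i hi
      fin_cases r
      · simp
      · rw [hj1v]
        norm_num
        push_cast at hd ⊢
        field_simp
        ring
  refine ⟨fun i => ⟨1 + lam i, fun r => key i r⟩, ?_, ?_⟩
  · -- B * Λ * Dᵀ = 0
    rw [Matrix.mul_assoc]
    ext i r
    have hiN : (i : ℕ) < N - 1 := i.isLt
    set i' : Fin N := Fin.castLE (Nat.sub_le N 1) i with hi'
    set jl : Fin N := ⟨N - 1, by omega⟩ with hjl
    have hneq : i' ≠ jl := by
      intro h
      have : (i : ℕ) = N - 1 := congrArg Fin.val h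
      omega
    have hsum : (B * (Λ * D.transpose)) i r
        = B i i' * (Λ * D.transpose) i' r + B i jl * (Λ * D.transpose) jl r := by
      rw [Matrix.mul_apply]
      calc ∑ k, B i k * (Λ * D.transpose) k r
          = ∑ k, ((if k = i' then B i i' * (Λ * D.transpose) i' r else 0)
              + (if k = jl then B i jl * (Λ * D.transpose) jl r else 0)) := by
            refine Finset.sum_congr rfl fun k _ => ?_
            by_cases h1 : k = i'
            · subst h1
              simp [hneq]
            · by_cases h2 : k = jl
              · subst h2
                simp [h1]
              · have h1' : ¬ ((k : ℕ) = (i : ℕ)) := fun hc => h1 (Fin.ext hc)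
                have h2' : ¬ ((k : ℕ) = N - 1) := fun hc => h2 (Fin.ext hc)
                rw [hB, if_neg h1', if_neg h2']
                simp [h1, h2]
        _ = B i i' * (Λ * D.transpose) i' r + B i jl * (Λ * D.transpose) jl r := by
            rw [Finset.sum_add_distrib]
            simp
    have hBii : B i i' = 1 := by
      have hv : (i' : ℕ) = (i : ℕ) := rfl
      rw [hB, if_pos hv]
    have hBijl : B i jl = -(1 + lam i') / (1 + lam jl) := by
      rw [hB]
      have h1 : ¬ ((jl : ℕ) = (i : ℕ)) := by
        show ¬ (N - 1 = (i : ℕ)); omega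
      rw [if_neg h1, if_pos rfl]
    rw [Matrix.zero_apply] at *
    rw [hsum, hBii, hBijl, key, key]
    have h2 := hone jl
    field_simp
    split_ifs <;> ring
  · -- entries of last column of B are nonzero
    intro i
    have hiN : (i : ℕ) < N - 1 := i.isLt
    have hBijl : B i ⟨N - 1, by omega⟩
        = -(1 + lam (Fin.castLE (Nat.sub_le N 1) i)) / (1 + lam ⟨N - 1, by omega⟩) := by
      rw [hB]
      have h1 : ¬ ((N - 1 : ℕ) = (i : ℕ)) := by omega
      simp [h1]
    rw [hBijl]
    exact div_ne_zero (neg_ne_zero.mpr (hone _)) (hone _)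
end

section
/- Impossibility of low-rate secure aggregation (entropy form): let S, Y_1, ..., Y_K be finitely-valued random variables and T ⊆ [K]. Suppose H(S) = L > 0, H(S | Y_1, ..., Y_K) = 0, H(Y_j) ≤ L/n for every j ∉ T, and I(S; (Y_j)_{j ∈ T}) = 0. Then K − |T| ≥ n. -/
open MeasureTheory

/-- Shannon entropy of a finitely-valued random variable. -/
noncomputable def shannonEntropy {Ω S : Type*} [MeasurableSpace Ω] [Fintype S]
    (μ : Measure Ω) (X : Ω → S) : ℝ :=
  ∑ s : S, Real.negMulLog (μ (X ⁻¹' {s})).toReal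

/-- Conditional Shannon entropy `H(X | Y) = H(X, Y) − H(Y)`. -/
noncomputable def condShannonEntropy {Ω S T : Type*} [MeasurableSpace Ω]
    [Fintype S] [Fintype T] (μ : Measure Ω) (X : Ω → S) (Y : Ω → T) : ℝ :=
  shannonEntropy μ (fun ω => (X ω, Y ω)) - shannonEntropy μ Y

/-- Mutual information `I(X; Y) = H(X) + H(Y) − H(X, Y)`. -/
noncomputable def mutualInfoRV {Ω S T : Type*} [MeasurableSpace Ω]
    [Fintype S] [Fintype T] (μ : Measure Ω) (X : Ω → S) (Y : Ω → T) : ℝ :=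
  shannonEntropy μ X + shannonEntropy μ Y - shannonEntropy μ (fun ω => (X ω, Y ω))

set_option linter.unusedSectionVars false in
lemma aux_neg_mul_log_le {x y : ℝ} (hx : 0 ≤ x) (hxy : x ≤ y) :
    -(x * Real.log y) ≤ Real.negMulLog x := by
  rcases eq_or_lt_of_le hx with h | h
  · simp [← h]
  · simp only [Real.negMulLog, neg_mul]
    have hlog : Real.log x ≤ Real.log y := Real.log_le_log h hxy
    nlinarith

lemma aux_negMulLog_sum_le {α : Type*} (s : Finset α) (p : α → ℝ) (hp : ∀ a ∈ s, 0 ≤ p a) :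
    Real.negMulLog (∑ a ∈ s, p a) ≤ ∑ a ∈ s, Real.negMulLog (p a) := by
  have h1 : Real.negMulLog (∑ a ∈ s, p a) = ∑ a ∈ s, -(p a * Real.log (∑ b ∈ s, p b)) := by
    simp only [Real.negMulLog, neg_mul]
    rw [Finset.sum_neg_distrib, ← Finset.sum_mul]
  rw [h1]
  refine Finset.sum_le_sum fun a ha => aux_neg_mul_log_le (hp a ha) ?_
  exact Finset.single_le_sum hp ha

lemma aux_gibbs_term {p a b : ℝ} (hp : 0 ≤ p) (ha0 : 0 ≤ a) (hb0 : 0 ≤ b)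
    (ha : p ≤ a) (hb : p ≤ b) :
    Real.negMulLog p - (-(p * Real.log a)) - (-(p * Real.log b)) ≤ a * b - p := by
  rcases eq_or_lt_of_le hp with h | h
  · simp [← h]; positivity
  · have hpa : 0 < a := lt_of_lt_of_le h ha
    have hpb : 0 < b := lt_of_lt_of_le h hb
    have hdiv : 0 < a * b / p := by positivity
    have := Real.log_le_sub_one_of_pos hdiv
    rw [Real.log_div (by positivity) (ne_of_gt h), Real.log_mul (ne_of_gt hpa) (ne_of_gt hpb)] at this
    simp only [Real.negMulLog, neg_mul]
    have h2 : p * (Real.log a + Real.log b - Real.log p) ≤ p * (a * b / p - 1) :=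
      mul_le_mul_of_nonneg_left this hp
    have h3 : p * (a * b / p) = a * b := by field_simp
    nlinarith

section Aux

variable {Ω : Type*} [MeasurableSpace Ω] (μ : Measure Ω) [IsProbabilityMeasure μ]

lemma aux_entropy_subsingleton {S : Type*} [Fintype S] [Subsingleton S] (X : Ω → S) :
    shannonEntropy μ X = 0 := by
  refine Finset.sum_eq_zero fun s _ => ?_
  have h : X ⁻¹' {s} = Set.univ :=
    Set.eq_univ_of_forall fun ω => by simp [Subsingleton.elim (X ω) s]
  simp [h]

/-- Data processing: entropy of a function of `X` is at most entropy of `X`. -/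
lemma aux_entropy_comp_le {S T : Type*} [Fintype S] [Fintype T] [DecidableEq T]
    (X : Ω → S) (f : S → T) (hX : ∀ s : S, MeasurableSet (X ⁻¹' {s})) :
    shannonEntropy μ (fun ω => f (X ω)) ≤ shannonEntropy μ X := by
  unfold shannonEntropy
  have hr : ∑ s : S, Real.negMulLog (μ (X ⁻¹' {s})).toReal
      = ∑ t : T, ∑ s ∈ Finset.univ.filter (fun s => f s = t),
          Real.negMulLog (μ (X ⁻¹' {s})).toReal := by
    rw [Finset.sum_fiberwise_eq_sum_filter]
    simp
  rw [hr]
  refine Finset.sum_le_sum fun t _ => ?_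
  have hunion : (fun ω => f (X ω)) ⁻¹' {t}
      = ⋃ s ∈ Finset.univ.filter (fun s => f s = t), X ⁻¹' {s} := by
    ext ω
    simp [eq_comm]
  have hdisj : (↑(Finset.univ.filter (fun s => f s = t)) : Set S).PairwiseDisjoint
      (fun s => X ⁻¹' {s}) := fun a _ b _ hab => by
    apply Set.disjoint_left.mpr
    intro ω ha hb
    exact hab (by simp_all)
  have hmeas : μ ((fun ω => f (X ω)) ⁻¹' {t})
      = ∑ s ∈ Finset.univ.filter (fun s => f s = t), μ (X ⁻¹' {s}) := by
    rw [hunion, measure_biUnion_finset hdisj fun s _ => hX s]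
  have htr : (μ ((fun ω => f (X ω)) ⁻¹' {t})).toReal
      = ∑ s ∈ Finset.univ.filter (fun s => f s = t), (μ (X ⁻¹' {s})).toReal := by
    rw [hmeas, ENNReal.toReal_sum fun s _ => measure_ne_top μ _]
  rw [htr]
  exact aux_negMulLog_sum_le _ _ fun s _ => ENNReal.toReal_nonneg

/-- Entropy is invariant under injective post-composition. -/
lemma aux_entropy_comp_inj {S T : Type*} [Fintype S] [Fintype T] [DecidableEq T]
    (X : Ω → S) (f : S → T) (hf : Function.Injective f) :
    shannonEntropy μ (fun ω => f (X ω)) = shannonEntropy μ X := by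
  unfold shannonEntropy
  rw [← Finset.sum_subset (Finset.subset_univ (Finset.univ.image f))
      (fun t _ ht => ?_), Finset.sum_image (fun a _ b _ h => hf h)]
  · refine Finset.sum_congr rfl fun s _ => ?_
    have h : (fun ω => f (X ω)) ⁻¹' {f s} = X ⁻¹' {s} := by
      ext ω; simp [hf.eq_iff]
    rw [h]
  · have h : (fun ω => f (X ω)) ⁻¹' {t} = ∅ := by
      ext ω
      simp only [Set.mem_preimage, Set.mem_singleton_iff, Set.mem_empty_iff_false, iff_false]
      intro hc
      exact ht (hc ▸ Finset.mem_image_of_mem f (Finset.mem_univ (X ω)))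
    simp [h]

/-- Subadditivity of entropy for pairs. -/
lemma aux_entropy_pair_le {S T : Type*} [Fintype S] [Fintype T]
    (X : Ω → S) (Y : Ω → T)
    (hX : ∀ s : S, MeasurableSet (X ⁻¹' {s})) (hY : ∀ t : T, MeasurableSet (Y ⁻¹' {t})) :
    shannonEntropy μ (fun ω => (X ω, Y ω)) ≤ shannonEntropy μ X + shannonEntropy μ Y := by
  classical
  set P : S × T → ℝ := fun z => (μ ((fun ω => (X ω, Y ω)) ⁻¹' {z})).toReal with hP
  have hpre : ∀ z : S × T, (fun ω => (X ω, Y ω)) ⁻¹' {z} = X ⁻¹' {z.1} ∩ Y ⁻¹' {z.2} := by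
    intro z; ext ω; simp [Prod.ext_iff]
  have hPmeas : ∀ z : S × T, MeasurableSet ((fun ω => (X ω, Y ω)) ⁻¹' {z}) := fun z => by
    rw [hpre]; exact (hX z.1).inter (hY z.2)
  have hP0 : ∀ z, 0 ≤ P z := fun z => ENNReal.toReal_nonneg
  have hm1 : ∀ s : S, (μ (X ⁻¹' {s})).toReal = ∑ t : T, P (s, t) := by
    intro s
    have hu : X ⁻¹' {s} = ⋃ t ∈ (Finset.univ : Finset T), (fun ω => (X ω, Y ω)) ⁻¹' {(s, t)} := by
      ext ω
      simp [Prod.ext_iff]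
    have hd : (↑(Finset.univ : Finset T) : Set T).PairwiseDisjoint
        (fun t => (fun ω => (X ω, Y ω)) ⁻¹' {(s, t)}) := fun a _ b _ hab => by
      apply Set.disjoint_left.mpr
      intro ω ha hb
      apply hab
      simp only [Set.mem_preimage, Set.mem_singleton_iff, Prod.ext_iff] at ha hb
      rw [← ha.2, ← hb.2]
    rw [hu, measure_biUnion_finset hd fun t _ => hPmeas (s, t),
      ENNReal.toReal_sum fun t _ => measure_ne_top μ _]
  have hm2 : ∀ t : T, (μ (Y ⁻¹' {t})).toReal = ∑ s : S, P (s, t) := by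
    intro t
    have hu : Y ⁻¹' {t} = ⋃ s ∈ (Finset.univ : Finset S), (fun ω => (X ω, Y ω)) ⁻¹' {(s, t)} := by
      ext ω
      simp [Prod.ext_iff]
    have hd : (↑(Finset.univ : Finset S) : Set S).PairwiseDisjoint
        (fun s => (fun ω => (X ω, Y ω)) ⁻¹' {(s, t)}) := fun a _ b _ hab => by
      apply Set.disjoint_left.mpr
      intro ω ha hb
      apply hab
      simp only [Set.mem_preimage, Set.mem_singleton_iff, Prod.ext_iff] at ha hb
      rw [← ha.1, ← hb.1]
    rw [hu, measure_biUnion_finset hd fun s _ => hPmeas (s, t),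
      ENNReal.toReal_sum fun s _ => measure_ne_top μ _]
  have htot : ∑ z : S × T, P z = 1 := by
    have hu : (Set.univ : Set Ω) = ⋃ z ∈ (Finset.univ : Finset (S × T)),
        (fun ω => (X ω, Y ω)) ⁻¹' {z} := by
      ext ω
      simp
    have hd : (↑(Finset.univ : Finset (S × T)) : Set (S × T)).PairwiseDisjoint
        (fun z => (fun ω => (X ω, Y ω)) ⁻¹' {z}) := fun a _ b _ hab => by
      apply Set.disjoint_left.mpr
      intro ω ha hb
      apply hab
      simp only [Set.mem_preimage, Set.mem_singleton_iff] at ha hb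
      rw [← ha, ← hb]
    have h2 := measure_biUnion_finset (μ := μ) hd fun z _ => hPmeas z
    rw [← hu, measure_univ] at h2
    rw [hP, ← ENNReal.toReal_sum fun z _ => measure_ne_top μ _, ← h2]
    simp
  have hHX : shannonEntropy μ X = ∑ s : S, Real.negMulLog (∑ t : T, P (s, t)) := by
    unfold shannonEntropy
    exact Finset.sum_congr rfl fun s _ => by rw [hm1 s]
  have hHY : shannonEntropy μ Y = ∑ t : T, Real.negMulLog (∑ s : S, P (s, t)) := by
    unfold shannonEntropy
    exact Finset.sum_congr rfl fun t _ => by rw [hm2 t]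
  have hHXY : shannonEntropy μ (fun ω => (X ω, Y ω))
      = ∑ s : S, ∑ t : T, Real.negMulLog (P (s, t)) := by
    unfold shannonEntropy
    rw [Fintype.sum_prod_type]
  have hXexp : ∑ s : S, Real.negMulLog (∑ t : T, P (s, t))
      = ∑ s : S, ∑ t : T, -(P (s, t) * Real.log (∑ t' : T, P (s, t'))) := by
    refine Finset.sum_congr rfl fun s _ => ?_
    simp only [Real.negMulLog, neg_mul]
    rw [Finset.sum_neg_distrib, ← Finset.sum_mul]
  have hYexp : ∑ t : T, Real.negMulLog (∑ s : S, P (s, t))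
      = ∑ s : S, ∑ t : T, -(P (s, t) * Real.log (∑ s' : S, P (s', t))) := by
    rw [Finset.sum_comm]
    refine Finset.sum_congr rfl fun t _ => ?_
    simp only [Real.negMulLog, neg_mul]
    rw [Finset.sum_neg_distrib, ← Finset.sum_mul]
  have hPs1 : ∑ s : S, ∑ t : T, P (s, t) = 1 := by
    rw [← Fintype.sum_prod_type]; exact htot
  have hQt1 : ∑ t : T, ∑ s : S, P (s, t) = 1 := by
    rw [Finset.sum_comm]; exact hPs1
  have key : ∀ s : S, ∀ t : T, Real.negMulLog (P (s, t))
      ≤ -(P (s, t) * Real.log (∑ t' : T, P (s, t')))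
        + -(P (s, t) * Real.log (∑ s' : S, P (s', t)))
        + ((∑ t' : T, P (s, t')) * (∑ s' : S, P (s', t)) - P (s, t)) := by
    intro s t
    have h := aux_gibbs_term (hP0 (s, t))
      (Finset.sum_nonneg fun t' _ => hP0 (s, t'))
      (Finset.sum_nonneg fun s' _ => hP0 (s', t))
      (Finset.single_le_sum (fun t' _ => hP0 (s, t')) (Finset.mem_univ t))
      (Finset.single_le_sum (fun s' _ => hP0 (s', t)) (Finset.mem_univ s))
    linarith
  have hineq : ∑ s : S, ∑ t : T, Real.negMulLog (P (s, t))
      ≤ ∑ s : S, ∑ t : T, (-(P (s, t) * Real.log (∑ t' : T, P (s, t')))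
          + -(P (s, t) * Real.log (∑ s' : S, P (s', t)))
          + ((∑ t' : T, P (s, t')) * (∑ s' : S, P (s', t)) - P (s, t))) :=
    Finset.sum_le_sum fun s _ => Finset.sum_le_sum fun t _ => key s t
  have hprod : ∑ s : S, ∑ t : T, (∑ t' : T, P (s, t')) * (∑ s' : S, P (s', t)) = 1 := by
    rw [← Finset.sum_mul_sum, hPs1, hQt1, one_mul]
  have hsplit : ∑ s : S, ∑ t : T, (-(P (s, t) * Real.log (∑ t' : T, P (s, t')))
          + -(P (s, t) * Real.log (∑ s' : S, P (s', t)))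
          + ((∑ t' : T, P (s, t')) * (∑ s' : S, P (s', t)) - P (s, t)))
      = (∑ s : S, ∑ t : T, -(P (s, t) * Real.log (∑ t' : T, P (s, t'))))
        + (∑ s : S, ∑ t : T, -(P (s, t) * Real.log (∑ s' : S, P (s', t))))
        + ((∑ s : S, ∑ t : T, (∑ t' : T, P (s, t')) * (∑ s' : S, P (s', t)))
          - ∑ s : S, ∑ t : T, P (s, t)) := by
    simp [Finset.sum_add_distrib, Finset.sum_sub_distrib]
  rw [hHXY, hHX, hHY, hXexp, hYexp]
  rw [hsplit, hprod, hPs1] at hineq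
  linarith

lemma aux_tuple_entropy_le {τ : Type*} [MeasurableSpace τ] [MeasurableSingletonClass τ]
    [Fintype τ] {K : ℕ} (Y : Fin K → Ω → τ) (hYm : ∀ j, Measurable (Y j))
    (A : Finset (Fin K)) :
    shannonEntropy μ (fun ω => fun j : {j : Fin K // j ∈ A} => Y j.1 ω)
      ≤ ∑ j ∈ A, shannonEntropy μ (Y j) := by
  classical
  induction A using Finset.induction with
  | empty =>
      haveI : IsEmpty {j : Fin K // j ∈ (∅ : Finset (Fin K))} := ⟨fun j => Finset.notMem_empty j.1 j.2⟩
      rw [aux_entropy_subsingleton]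
      simp
  | @insert a A ha ih =>
      set e : ({j : Fin K // j ∈ insert a A} → τ) → τ × ({j : Fin K // j ∈ A} → τ) :=
        fun y => (y ⟨a, Finset.mem_insert_self a A⟩,
          fun j => y ⟨j.1, Finset.mem_insert_of_mem j.2⟩) with he
      have hinj : Function.Injective e := by
        intro y y' h
        rw [Prod.ext_iff] at h
        funext j
        rcases Finset.mem_insert.mp j.2 with h1 | h1
        · have := h.1
          simpa [he, show j = ⟨a, Finset.mem_insert_self a A⟩ from Subtype.ext h1] using this
        · have := congrFun h.2 ⟨j.1, h1⟩
          simpa [he] using this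
      have h1 : shannonEntropy μ (fun ω => fun j : {j : Fin K // j ∈ insert a A} => Y j.1 ω)
          = shannonEntropy μ (fun ω => (Y a ω, fun j : {j : Fin K // j ∈ A} => Y j.1 ω)) :=
        (aux_entropy_comp_inj μ _ e hinj).symm
      have hsmallm : Measurable (fun ω => fun j : {j : Fin K // j ∈ A} => Y j.1 ω) :=
        measurable_pi_lambda _ fun j => hYm j.1
      have h2 : shannonEntropy μ (fun ω => (Y a ω, fun j : {j : Fin K // j ∈ A} => Y j.1 ω))
          ≤ shannonEntropy μ (Y a)
            + shannonEntropy μ (fun ω => fun j : {j : Fin K // j ∈ A} => Y j.1 ω) :=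
        aux_entropy_pair_le μ _ _ (fun s => (hYm a) (measurableSet_singleton s))
          (fun t => hsmallm (measurableSet_singleton t))
      rw [Finset.sum_insert ha]
      calc shannonEntropy μ (fun ω => fun j : {j : Fin K // j ∈ insert a A} => Y j.1 ω)
          ≤ shannonEntropy μ (Y a)
            + shannonEntropy μ (fun ω => fun j : {j : Fin K // j ∈ A} => Y j.1 ω) := h1 ▸ h2
        _ ≤ shannonEntropy μ (Y a) + ∑ j ∈ A, shannonEntropy μ (Y j) := by linarith

end Aux

/-- Impossibility of low-rate secure aggregation (entropy form): if `H(S) = L > 0`,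
`S` is decodable from `Y₁, …, Y_K`, each `Y_j` with `j ∉ T` has `H(Y_j) ≤ L/n`, and
`S` is independent of `(Y_j)_{j ∈ T}`, then `K − |T| ≥ n`. -/
theorem stmt_15 {Ω σ τ : Type*} [MeasurableSpace Ω]
    [MeasurableSpace σ] [MeasurableSingletonClass σ] [Fintype σ]
    [MeasurableSpace τ] [MeasurableSingletonClass τ] [Fintype τ]
    {K : ℕ} (μ : Measure Ω) [IsProbabilityMeasure μ]
    (S : Ω → σ) (Y : Fin K → Ω → τ) (T : Finset (Fin K))
    (hSm : Measurable S) (hYm : ∀ j, Measurable (Y j))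
    (L n : ℝ) (hL : 0 < L) (hn : 0 < n)
    (hHS : shannonEntropy μ S = L)
    (hdec : condShannonEntropy μ S (fun ω => fun j : Fin K => Y j ω) = 0)
    (hload : ∀ j ∉ T, shannonEntropy μ (Y j) ≤ L / n)
    (hsec : mutualInfoRV μ S (fun ω => fun j : {j : Fin K // j ∈ T} => Y j.1 ω) = 0) :
    (K : ℝ) - T.card ≥ n := by
  classical
  set Yall : Ω → (Fin K → τ) := fun ω => fun j => Y j ω with hYall
  set YT : Ω → ({j : Fin K // j ∈ T} → τ) := fun ω => fun j => Y j.1 ω with hYT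
  set YTc : Ω → ({j : Fin K // j ∈ Tᶜ} → τ) := fun ω => fun j => Y j.1 ω with hYTc
  have hYallm : Measurable Yall := measurable_pi_lambda _ fun j => hYm j
  have hYTm : Measurable YT := measurable_pi_lambda _ fun j => hYm j.1
  have hYTcm : Measurable YTc := measurable_pi_lambda _ fun j => hYm j.1
  -- decodability: H(S, Yall) = H(Yall)
  have hA : shannonEntropy μ (fun ω => (S ω, Yall ω)) = shannonEntropy μ Yall := by
    have := hdec
    unfold condShannonEntropy at this
    linarith
  -- secrecy: H(S, YT) = L + H(YT)
  have hB : shannonEntropy μ (fun ω => (S ω, YT ω)) = L + shannonEntropy μ YT := by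
    have := hsec
    unfold mutualInfoRV at this
    rw [hHS] at this
    linarith
  -- step 1 : H(S, YT) ≤ H(S, Yall)
  have hSYallm : Measurable (fun ω => (S ω, Yall ω)) := hSm.prodMk hYallm
  have step1 : shannonEntropy μ (fun ω => (S ω, YT ω))
      ≤ shannonEntropy μ (fun ω => (S ω, Yall ω)) := by
    have := aux_entropy_comp_le μ (fun ω => (S ω, Yall ω))
      (fun z => (z.1, fun j : {j : Fin K // j ∈ T} => z.2 j.1))
      (fun z => hSYallm (measurableSet_singleton z))
    exact this
  -- step 2 : H(Yall) ≤ H(YT, YTc)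
  have hpairm : Measurable (fun ω => (YT ω, YTc ω)) := hYTm.prodMk hYTcm
  have step2 : shannonEntropy μ Yall ≤ shannonEntropy μ (fun ω => (YT ω, YTc ω)) := by
    set g : ({j : Fin K // j ∈ T} → τ) × ({j : Fin K // j ∈ Tᶜ} → τ) → (Fin K → τ) :=
      fun z => fun j => if h : j ∈ T then z.1 ⟨j, h⟩ else z.2 ⟨j, Finset.mem_compl.mpr h⟩ with hg
    have hcomp : (fun ω => g ((YT ω, YTc ω))) = Yall := by
      funext ω
      funext j
      by_cases h : j ∈ T <;> simp [hg, h, hYT, hYTc, hYall]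
    have := aux_entropy_comp_le μ (fun ω => (YT ω, YTc ω)) g
      (fun z => hpairm (measurableSet_singleton z))
    rw [hcomp] at this
    exact this
  -- step 3 : H(YT, YTc) ≤ H(YT) + H(YTc)
  have step3 : shannonEntropy μ (fun ω => (YT ω, YTc ω))
      ≤ shannonEntropy μ YT + shannonEntropy μ YTc :=
    aux_entropy_pair_le μ _ _ (fun s => hYTm (measurableSet_singleton s))
      (fun t => hYTcm (measurableSet_singleton t))
  -- step 4 : H(YTc) ≤ |Tᶜ| * (L / n)
  have step4 : shannonEntropy μ YTc ≤ (Tᶜ.card : ℝ) * (L / n) := by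
    calc shannonEntropy μ YTc ≤ ∑ j ∈ Tᶜ, shannonEntropy μ (Y j) :=
          aux_tuple_entropy_le μ Y hYm Tᶜ
      _ ≤ ∑ _j ∈ Tᶜ, L / n :=
          Finset.sum_le_sum fun j hj => hload j (Finset.mem_compl.mp hj)
      _ = (Tᶜ.card : ℝ) * (L / n) := by
          rw [Finset.sum_const, nsmul_eq_mul]
  -- combine
  have hchain : L ≤ (Tᶜ.card : ℝ) * (L / n) := by linarith
  have hcard : (n : ℝ) ≤ (Tᶜ.card : ℝ) := by
    by_contra hcon
    push_neg at hcon
    have h1 : (Tᶜ.card : ℝ) * (L / n) < n * (L / n) := by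
      apply mul_lt_mul_of_pos_right hcon
      positivity
    rw [mul_div_cancel₀ _ (ne_of_gt hn)] at h1
    linarith
  have hTle : T.card ≤ K := by
    simpa using Finset.card_le_univ T
  have : (Tᶜ.card : ℝ) = (K : ℝ) - T.card := by
    rw [Finset.card_compl, Fintype.card_fin]
    push_cast [Nat.cast_sub hTle]
    ring
  linarith
end
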